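/- arXiv:2507.11871 — 2 statements merged into one kernel-verified Lean document; each statement's English description precedes it below -/
import Mathlib

section
/- Let G = ℤ_{n₁} × ⋯ × ℤ_{n_d} with all n_i ≥ 2, let S be an inverse-closed subset of G∖{(0,…,0)}, and set S₀ = S ∪ {(0,…,0)}. A subset C of G is a perfect code in Cay(G, S) if and only if for each pair (I, g) with ∅ ≠ I ⊆ {1,…,d} and g = (g₁,…,g_d) ∈ G there exists a polynomial q_I^{(g)}(x₁,…,x_d) ∈ ℤ[x₁,…,x_d] divisible by (∏_{i=1}^d x_i^{g_i})·(∏_{i∈I}(x_i^{n_i} − 1)) such that f_C(x₁,…,x_d)·f_{S₀}(x₁,…,x_d) = Σ_{∅≠I⊆{1,…,d}} Σ_{g∈G} q_I^{(g)}(x₁,…,x_d) + ∏_{i=1}^d (Σ_{j=0}^{n_i−1} x_i^j). -/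
/-- The Cayley graph of an additive group `G` with connection set `S`.
(When `S` is inverse-closed and does not contain `0`, `x` and `y` are adjacent
iff `y - x ∈ S`.) -/
def cayley {G : Type*} [AddGroup G] (S : Set G) : SimpleGraph G :=
  SimpleGraph.fromRel (fun x y => y - x ∈ S)

/-- A perfect code in a graph: an independent set such that every vertex outside it
has exactly one neighbour in it. -/
def IsPerfectCode {V : Type*} (Γ : SimpleGraph V) (C : Set V) : Prop :=
  (∀ x ∈ C, ∀ y ∈ C, ¬ Γ.Adj x y) ∧ ∀ v, v ∉ C → ∃! c, c ∈ C ∧ Γ.Adj v c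

/-- A total perfect code in a graph: every vertex has exactly one neighbour in it. -/
def IsTotalPerfectCode {V : Type*} (Γ : SimpleGraph V) (C : Set V) : Prop :=
  ∀ v, ∃! c, c ∈ C ∧ Γ.Adj v c

/-- The subgroup of periods of a subset `X` of an abelian group:
`{g | X + g = X}`. -/
def periods {G : Type*} [AddCommGroup G] (X : Set G) : AddSubgroup G where
  carrier := {g | ∀ x : G, x + g ∈ X ↔ x ∈ X}
  zero_mem' := by simp
  add_mem' := by
    intro a b ha hb x
    rw [← add_assoc]
    exact (hb _).trans (ha x)
  neg_mem' := by
    intro a ha x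
    have := ha (x + -a)
    simpa using this.symm

/-- `(A, B)` is a factorization of the abelian group `G`: every element of `G` can be
uniquely written as `a + b` with `a ∈ A` and `b ∈ B`. -/
def IsFactorization {G : Type*} [AddCommGroup G] (A B : Set G) : Prop :=
  ∀ g : G, ∃! ab : G × G, ab.1 ∈ A ∧ ab.2 ∈ B ∧ ab.1 + ab.2 = g

/-- An abelian group is good if in every factorization of it into two factors
at least one factor is periodic. -/
def IsGood (G : Type*) [AddCommGroup G] : Prop :=
  ∀ A B : Set G, IsFactorization A B → periods A ≠ ⊥ ∨ periods B ≠ ⊥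

/-!
Modulo the ideal `J = (x_i ^ n_i - 1)ᵢ` the monomial `x^g` behaves like the group element `g`:
`x^g x^h ≡ x^(g + h)`, and reduction mod `J` is the map to the group ring `ℤ[G]`. A set `C` is a
perfect code exactly when every `v` is uniquely `c + s` with `c ∈ C`, `s ∈ S₀`; then
`f_C f_{S₀} ≡ Σ_g x^g = ∏ᵢ (1 + ⋯ + x_i ^ (n_i - 1))` mod `J`, and conversely the coefficient of
`v` in the image of `f_C f_{S₀}` in `ℤ[G]` counts these decompositions. Finally, the
`q_I^{(g)}` all lie in `J`, and an element `Σᵢ rᵢ (x_i ^ n_i - 1)` of `J` is such a sum, with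
the summand `rᵢ (x_i ^ n_i - 1)` at `I = {i}`, `g = 0`.
-/

open MvPolynomial Finset

lemma isPerfectCode_iff_existsUnique {V : Type*} (Γ : SimpleGraph V) (C : Set V) :
    IsPerfectCode Γ C ↔ ∀ v, ∃! c, c ∈ C ∧ (c = v ∨ Γ.Adj v c) := by
  constructor
  · rintro ⟨hindep, hnbr⟩ v
    by_cases hv : v ∈ C
    · refine ⟨v, ⟨hv, Or.inl rfl⟩, ?_⟩
      rintro c ⟨hc, rfl | hadj⟩
      · rfl
      · exact absurd hadj (hindep v hv c hc)
    · obtain ⟨c, ⟨hc, hadj⟩, huniq⟩ := hnbr v hv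
      refine ⟨c, ⟨hc, Or.inr hadj⟩, ?_⟩
      rintro c' ⟨hc', rfl | hadj'⟩
      · exact absurd hc' hv
      · exact huniq c' ⟨hc', hadj'⟩
  · intro h
    refine ⟨fun x hx y hy hadj => ?_, fun v hv => ?_⟩
    · have hyx : y = x := (h x).unique ⟨hy, Or.inr hadj⟩ ⟨hx, Or.inl rfl⟩
      exact hadj.ne hyx.symm
    · obtain ⟨c, ⟨hc, hcv⟩, huniq⟩ := h v
      have hadj : Γ.Adj v c := hcv.resolve_left fun hcv => hv (hcv ▸ hc)
      exact ⟨c, ⟨hc, hadj⟩, fun c' ⟨hc', hadj'⟩ => huniq c' ⟨hc', Or.inr hadj'⟩⟩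

section Factorization

variable {G : Type*} [AddCommGroup G]

lemma cayley_adj_iff {S : Set G} (h0 : (0 : G) ∉ S) (hinv : ∀ s ∈ S, -s ∈ S) {x y : G} :
    (cayley S).Adj x y ↔ x - y ∈ S := by
  have hswap : y - x ∈ S ↔ x - y ∈ S :=
    ⟨fun h => neg_sub y x ▸ hinv _ h, fun h => neg_sub x y ▸ hinv _ h⟩
  simp only [cayley, SimpleGraph.fromRel_adj, hswap, or_self, and_iff_right_iff_imp]
  rintro h rfl
  exact h0 (sub_self x ▸ h)

lemma isFactorization_iff_existsUnique_sub_mem (A B : Set G) :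
    IsFactorization A B ↔ ∀ v, ∃! a, a ∈ A ∧ v - a ∈ B := by
  refine forall_congr' fun v => ⟨?_, ?_⟩
  · rintro ⟨⟨a, b⟩, ⟨ha, hb, rfl⟩, huniq⟩
    refine ⟨a, ⟨ha, by simpa using hb⟩, fun a' ⟨ha', hb'⟩ => ?_⟩
    exact congrArg Prod.fst (huniq (a', a + b - a') ⟨ha', hb', add_sub_cancel a' _⟩)
  · rintro ⟨a, ⟨ha, hb⟩, huniq⟩
    refine ⟨(a, v - a), ⟨ha, hb, add_sub_cancel a v⟩, ?_⟩
    rintro ⟨a', b'⟩ ⟨ha', hb', rfl⟩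
    obtain rfl : a' = a := huniq a' ⟨ha', by simpa using hb'⟩
    simp

/-- Writing `v = c + s` with `s ∈ S ∪ {0}` says that `c` is `v` itself or a neighbour of `v`. -/
lemma isPerfectCode_cayley_iff_isFactorization {S : Set G} (h0 : (0 : G) ∉ S)
    (hinv : ∀ s ∈ S, -s ∈ S) (C : Set G) :
    IsPerfectCode (cayley S) C ↔ IsFactorization C (insert 0 S) := by
  rw [isPerfectCode_iff_existsUnique, isFactorization_iff_existsUnique_sub_mem]
  refine forall_congr' fun v => existsUnique_congr fun c => and_congr_right' ?_
  rw [Set.mem_insert_iff, sub_eq_zero, cayley_adj_iff h0 hinv, eq_comm]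

lemma IsFactorization.sum_comp_add [Fintype G] {A B : Finset G}
    (h : IsFactorization (A : Set G) B) {M : Type*} [AddCommMonoid M] (f : G → M) :
    ∑ p ∈ A ×ˢ B, f (p.1 + p.2) = ∑ v, f v := by
  refine sum_nbij (fun p => p.1 + p.2) (fun _ _ => mem_univ _) ?_ ?_ fun _ _ => rfl
  · intro p hp q hq hpq
    simp only [coe_product, Set.mem_prod, mem_coe] at hp hq
    exact (h (p.1 + p.2)).unique ⟨hp.1, hp.2, rfl⟩ ⟨hq.1, hq.2, hpq.symm⟩
  · intro v _
    obtain ⟨p, ⟨ha, hb, rfl⟩, -⟩ := h v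
    exact ⟨p, by simpa using And.intro ha hb, rfl⟩

variable [DecidableEq G]

lemma isFactorization_iff_card_filter (A B : Finset G) :
    IsFactorization (A : Set G) B ↔ ∀ v, #{p ∈ A ×ˢ B | p.1 + p.2 = v} = 1 := by
  refine forall_congr' fun v => ?_
  rw [card_eq_one_iff_existsUnique]
  simp only [mem_filter, mem_product, mem_coe, and_assoc]

lemma isFactorization_of_mul_eq [Fintype G] {R : Type*} [Semiring R] [CharZero R]
    {A B : Finset G}
    (h : (∑ a ∈ A, AddMonoidAlgebra.single a (1 : R)) * ∑ b ∈ B, AddMonoidAlgebra.single b 1 =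
      ∑ v, AddMonoidAlgebra.single v 1) :
    IsFactorization (A : Set G) B := by
  rw [isFactorization_iff_card_filter]
  intro v
  rw [sum_mul_sum, ← sum_product'] at h
  have hv := congrArg (fun x => x.coeff v) h
  simp only [AddMonoidAlgebra.single_mul_single, mul_one, AddMonoidAlgebra.coeff_sum,
    Finsupp.finsetSum_apply, AddMonoidAlgebra.coeff_single, Finsupp.single_apply,
    sum_ite_eq', mem_univ, if_true, sum_boole] at hv
  exact_mod_cast hv

end Factorization

section Polynomial

variable (R : Type*) [CommRing R] {d : ℕ} (n : Fin d → ℕ)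

noncomputable def zmodMonomial (g : ∀ i, ZMod (n i)) : MvPolynomial (Fin d) R :=
  ∏ i, X i ^ (g i).val

noncomputable def cyclicIdeal : Ideal (MvPolynomial (Fin d) R) :=
  Ideal.span (Set.range fun i => X i ^ n i - 1)

lemma X_pow_sub_X_pow_mod_mem_cyclicIdeal (i : Fin d) (a : ℕ) :
    X i ^ a - X i ^ (a % n i) ∈ cyclicIdeal R n := by
  have hdvd : (X i : MvPolynomial (Fin d) R) ^ n i - 1 ∣ (X i ^ n i) ^ (a / n i) - 1 := by
    simpa using sub_dvd_pow_sub_pow (X i ^ n i : MvPolynomial (Fin d) R) 1 (a / n i)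
  have hsplit : (X i : MvPolynomial (Fin d) R) ^ a - X i ^ (a % n i) =
      X i ^ (a % n i) * ((X i ^ n i) ^ (a / n i) - 1) := by
    rw [mul_sub, mul_one, ← pow_mul, ← pow_add, Nat.mod_add_div]
  rw [hsplit]
  exact Ideal.mul_mem_left _ _ (Ideal.mem_of_dvd _ hdvd (Ideal.subset_span ⟨i, rfl⟩))

lemma zmodMonomial_mul_sub_zmodMonomial_add_mem_cyclicIdeal [∀ i, NeZero (n i)]
    (g h : ∀ i, ZMod (n i)) :
    zmodMonomial R n g * zmodMonomial R n h - zmodMonomial R n (g + h) ∈ cyclicIdeal R n := by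
  rw [← Ideal.Quotient.eq, zmodMonomial, zmodMonomial, zmodMonomial, ← prod_mul_distrib]
  simp only [map_prod]
  refine prod_congr rfl fun i _ => ?_
  rw [← pow_add, Pi.add_apply, ZMod.val_add, Ideal.Quotient.eq]
  exact X_pow_sub_X_pow_mod_mem_cyclicIdeal R n i _

lemma sum_range_eq_sum_zmod_val {M : Type*} [AddCommMonoid M] (m : ℕ) [NeZero m] (f : ℕ → M) :
    ∑ j ∈ range m, f j = ∑ a : ZMod m, f a.val := by
  refine (sum_nbij ZMod.val (fun a _ => mem_range.2 (ZMod.val_lt a))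
    (ZMod.val_injective m).injOn (fun j hj => ?_) fun _ _ => rfl).symm
  exact ⟨j, mem_coe.2 (mem_univ _), ZMod.val_cast_of_lt (mem_range.1 hj)⟩

lemma prod_sum_X_pow_eq_sum_zmodMonomial [∀ i, NeZero (n i)] :
    ∏ i, ∑ j ∈ range (n i), (X i : MvPolynomial (Fin d) R) ^ j = ∑ g, zmodMonomial R n g := by
  simp_rw [sum_range_eq_sum_zmod_val, prod_univ_sum, Fintype.piFinset_univ, zmodMonomial]

noncomputable def toGroupRing :
    MvPolynomial (Fin d) R →ₐ[R] AddMonoidAlgebra R (∀ i, ZMod (n i)) :=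
  aeval fun i => AddMonoidAlgebra.single (Pi.single i 1) 1

lemma toGroupRing_X_pow (i : Fin d) (k : ℕ) :
    toGroupRing R n (X i ^ k) = AddMonoidAlgebra.single (Pi.single i (k : ZMod (n i))) 1 := by
  rw [map_pow, toGroupRing, aeval_X, AddMonoidAlgebra.single_pow, one_pow, ← Pi.single_smul,
    nsmul_eq_mul, mul_one]

lemma toGroupRing_zmodMonomial [∀ i, NeZero (n i)] (g : ∀ i, ZMod (n i)) :
    toGroupRing R n (zmodMonomial R n g) = AddMonoidAlgebra.single g 1 := by
  simp only [zmodMonomial, map_prod, toGroupRing_X_pow, AddMonoidAlgebra.prod_single,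
    prod_const_one, ZMod.natCast_zmod_val, univ_sum_single]

lemma cyclicIdeal_le_ker_toGroupRing : cyclicIdeal R n ≤ RingHom.ker (toGroupRing R n) := by
  rw [cyclicIdeal, Ideal.span_le]
  rintro _ ⟨i, rfl⟩
  rw [SetLike.mem_coe, RingHom.mem_ker, map_sub, map_one, toGroupRing_X_pow, ZMod.natCast_self,
    Pi.single_zero, sub_eq_zero]
  rfl

lemma exists_decomposition_iff_sub_mem_cyclicIdeal [∀ i, NeZero (n i)]
    (P F : MvPolynomial (Fin d) R) :
    (∃ q : Finset (Fin d) → (∀ i, ZMod (n i)) → MvPolynomial (Fin d) R,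
        (∀ I : Finset (Fin d), I.Nonempty → ∀ g,
          zmodMonomial R n g * ∏ i ∈ I, (X i ^ n i - 1) ∣ q I g) ∧
        P = (∑ I ∈ univ.filter Finset.Nonempty, ∑ g, q I g) + F) ↔
      P - F ∈ cyclicIdeal R n := by
  constructor
  · rintro ⟨q, hdvd, rfl⟩
    rw [add_sub_cancel_right]
    refine Ideal.sum_mem _ fun I hI => Ideal.sum_mem _ fun g _ => ?_
    obtain ⟨i, hi⟩ := (mem_filter.1 hI).2
    exact Ideal.mem_of_dvd _ ((dvd_mul_left _ _).trans (hdvd I ⟨i, hi⟩ g))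
      (Ideal.prod_mem _ hi (Ideal.subset_span ⟨i, rfl⟩))
  · intro h
    obtain ⟨r, hr⟩ := Ideal.mem_span_range_iff_exists_fun.1 h
    refine ⟨fun I g => ∑ i, if I = {i} ∧ g = 0 then r i * (X i ^ n i - 1) else 0,
      fun I _ g => dvd_sum fun i _ => ?_, ?_⟩
    · split_ifs with hIg
      · obtain ⟨rfl, rfl⟩ := hIg
        simp [zmodMonomial]
      · exact dvd_zero _
    · rw [← sub_add_cancel P F, ← hr, add_left_inj, sum_congr rfl fun I _ => sum_comm, sum_comm]
      simp [ite_and]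

lemma isFactorization_iff_sub_mem_cyclicIdeal [CharZero R] [∀ i, NeZero (n i)]
    (A B : Finset (∀ i, ZMod (n i))) :
    IsFactorization (A : Set (∀ i, ZMod (n i))) B ↔
      (∑ a ∈ A, zmodMonomial R n a) * (∑ b ∈ B, zmodMonomial R n b) -
        ∏ i, ∑ j ∈ range (n i), (X i : MvPolynomial (Fin d) R) ^ j ∈ cyclicIdeal R n := by
  rw [prod_sum_X_pow_eq_sum_zmodMonomial]
  constructor
  · intro h
    rw [← Ideal.Quotient.eq, sum_mul_sum, ← sum_product', ← h.sum_comp_add, map_sum, map_sum]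
    exact sum_congr rfl fun p _ => Ideal.Quotient.eq.2
      (zmodMonomial_mul_sub_zmodMonomial_add_mem_cyclicIdeal R n p.1 p.2)
  · intro h
    have hker := cyclicIdeal_le_ker_toGroupRing R n h
    rw [RingHom.mem_ker, map_sub, sub_eq_zero, map_mul] at hker
    simp only [map_sum, toGroupRing_zmodMonomial] at hker
    exact isFactorization_of_mul_eq hker

end Polynomial

open MvPolynomial in
theorem perfectCode_iff_polynomial_general (d : ℕ) (n : Fin d → ℕ)
    [∀ i, NeZero (n i)]
    (S : Finset (∀ i, ZMod (n i))) (h0 : (0 : ∀ i, ZMod (n i)) ∉ S)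
    (hinv : ∀ s ∈ S, -s ∈ S) (C : Finset (∀ i, ZMod (n i))) :
    IsPerfectCode (cayley (S : Set (∀ i, ZMod (n i)))) (C : Set (∀ i, ZMod (n i))) ↔
      ∃ q : Finset (Fin d) → (∀ i, ZMod (n i)) → MvPolynomial (Fin d) ℤ,
        (∀ I : Finset (Fin d), I.Nonempty → ∀ g : ∀ i, ZMod (n i),
          ((∏ i, (X i : MvPolynomial (Fin d) ℤ) ^ (g i).val) *
            ∏ i ∈ I, ((X i : MvPolynomial (Fin d) ℤ) ^ (n i) - 1)) ∣ q I g) ∧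
        (∑ c ∈ C, ∏ i, (X i : MvPolynomial (Fin d) ℤ) ^ (c i).val) *
            (∑ s ∈ insert 0 S, ∏ i, (X i : MvPolynomial (Fin d) ℤ) ^ (s i).val) =
          (∑ I ∈ Finset.univ.filter (Finset.Nonempty (α := Fin d)),
              ∑ g : ∀ i, ZMod (n i), q I g) +
            ∏ i, ∑ j ∈ Finset.range (n i), (X i : MvPolynomial (Fin d) ℤ) ^ j := by
  rw [isPerfectCode_cayley_iff_isFactorization (mod_cast h0) hinv, ← coe_insert,
    isFactorization_iff_sub_mem_cyclicIdeal ℤ n]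
  exact (exists_decomposition_iff_sub_mem_cyclicIdeal ℤ n _ _).symm

open MvPolynomial in
/-- Lemma 4.1: for `G = ℤ_{n₁} × ⋯ × ℤ_{n_d}` and an inverse-closed subset `S` of
`G ∖ {0}` with `S₀ = S ∪ {0}`, a subset `C` of `G` is a perfect code in
`Cay(G, S)` iff there are integer polynomials `q_I^{(g)}`, each divisible by
`(∏ i, x_i^{g_i}) ⬝ ∏_{i ∈ I} (x_i^{n_i} - 1)`, with
`f_C ⬝ f_{S₀} = Σ_{∅ ≠ I} Σ_g q_I^{(g)} + ∏ i (1 + x_i + ⋯ + x_i^{n_i - 1})`. -/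
theorem perfectCode_iff_polynomial (d : ℕ) (hd : 1 ≤ d) (n : Fin d → ℕ)
    (hn : ∀ i, 2 ≤ n i) [∀ i, NeZero (n i)]
    (S : Finset (∀ i, ZMod (n i))) (h0 : (0 : ∀ i, ZMod (n i)) ∉ S)
    (hinv : ∀ s ∈ S, -s ∈ S) (C : Finset (∀ i, ZMod (n i))) :
    IsPerfectCode (cayley (S : Set (∀ i, ZMod (n i)))) (C : Set (∀ i, ZMod (n i))) ↔
      ∃ q : Finset (Fin d) → (∀ i, ZMod (n i)) → MvPolynomial (Fin d) ℤ,
        (∀ I : Finset (Fin d), I.Nonempty → ∀ g : ∀ i, ZMod (n i),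
          ((∏ i, (X i : MvPolynomial (Fin d) ℤ) ^ (g i).val) *
            ∏ i ∈ I, ((X i : MvPolynomial (Fin d) ℤ) ^ (n i) - 1)) ∣ q I g) ∧
        (∑ c ∈ C, ∏ i, (X i : MvPolynomial (Fin d) ℤ) ^ (c i).val) *
            (∑ s ∈ insert 0 S, ∏ i, (X i : MvPolynomial (Fin d) ℤ) ^ (s i).val) =
          (∑ I ∈ Finset.univ.filter (Finset.Nonempty (α := Fin d)),
              ∑ g : ∀ i, ZMod (n i), q I g) +
            ∏ i, ∑ j ∈ Finset.range (n i), (X i : MvPolynomial (Fin d) ℤ) ^ j :=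
  perfectCode_iff_polynomial_general d n S h0 hinv C
end

section
/- Let n ≥ 4 be an integer and let S be an inverse-closed subset of ℤ_n∖{0} such that ⟨S⟩ = ℤ_n and |S| divides n. Then Cay(ℤ_n, S) admits a subgroup of ℤ_n as a total perfect code if and only if s ≢ s′ (mod |S|) for any two distinct s, s′ ∈ S. -/
lemma cayley_adj {n : ℕ} (S : Set (ZMod n)) (h0 : (0 : ZMod n) ∉ S)
    (hinv : ∀ s ∈ S, -s ∈ S) (x y : ZMod n) :
    (cayley S).Adj x y ↔ y - x ∈ S := by
  unfold cayley
  rw [SimpleGraph.fromRel_adj]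
  constructor
  · rintro ⟨hne, h | h⟩
    · exact h
    · have := hinv _ h; simpa using this
  · intro h
    refine ⟨?_, Or.inl h⟩
    rintro rfl
    rw [sub_self] at h
    exact h0 h

/-- Theorem 5.2: let `n ≥ 4` and `S` an inverse-closed generating subset of
`ℤ_n ∖ {0}` with `|S| ∣ n`. Then `Cay(ℤ_n, S)` admits a subgroup of `ℤ_n` as a
total perfect code iff `s ≢ s' (mod |S|)` for any two distinct `s, s' ∈ S`. -/
theorem subgroup_totalPerfectCode_iff (n : ℕ) (hn : 4 ≤ n)
    (S : Set (ZMod n)) (h0 : (0 : ZMod n) ∉ S) (hinv : ∀ s ∈ S, -s ∈ S)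
    (hgen : AddSubgroup.closure S = ⊤) (hdvd : S.ncard ∣ n) :
    (∃ H : AddSubgroup (ZMod n),
        IsTotalPerfectCode (cayley S) (H : Set (ZMod n))) ↔
      ∀ s ∈ S, ∀ s' ∈ S, s ≠ s' → ¬ (s.val ≡ s'.val [MOD S.ncard]) := by
  haveI : NeZero n := ⟨by omega⟩
  have hadj := cayley_adj S h0 hinv
  set m := S.ncard with hmdef
  have hSfin : S.Finite := Set.toFinite S
  have hSne : S.Nonempty := by
    by_contra h
    rw [Set.not_nonempty_iff_eq_empty] at h
    subst h
    rw [AddSubgroup.closure_empty] at hgen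
    have h1 : (1 : ZMod n) ∈ (⊥ : AddSubgroup (ZMod n)) := hgen ▸ AddSubgroup.mem_top 1
    rw [AddSubgroup.mem_bot] at h1
    haveI : Fact (1 < n) := ⟨by omega⟩
    exact one_ne_zero h1
  have hmpos : 0 < m := hSne.ncard_pos hSfin
  haveI : NeZero m := ⟨hmpos.ne'⟩
  set π : ZMod n →+* ZMod m := ZMod.castHom hdvd (ZMod m) with hπdef
  have hπ : ∀ x : ZMod n, π x = (x.val : ZMod m) := by
    intro x
    conv_lhs => rw [← ZMod.natCast_rightInverse x]
    rw [map_natCast]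
  have hπsurj : Function.Surjective π := by
    intro y
    refine ⟨(y.val : ZMod n), ?_⟩
    rw [map_natCast, ZMod.natCast_rightInverse y]
  have hker : ∀ x : ZMod n, π x = 0 ↔ m ∣ x.val := by
    intro x
    rw [hπ, ZMod.natCast_eq_zero_iff]
  constructor
  · rintro ⟨H, hH⟩
    -- counting: Nat.card H * m = n
    have hbij : Function.Bijective (fun p : H × S => (p.1 : ZMod n) - p.2) := by
      constructor
      · rintro ⟨⟨h, hh⟩, ⟨s, hs⟩⟩ ⟨⟨h', hh'⟩, ⟨s', hs'⟩⟩ heq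
        simp only at heq
        obtain ⟨c, -, huniq⟩ := hH (h - s)
        have e1 : h = c := huniq h ⟨hh, (hadj _ _).2 (by rw [sub_sub_cancel]; exact hs)⟩
        have e2 : h' = c := huniq h' ⟨hh', (hadj _ _).2 (by rw [heq, sub_sub_cancel]; exact hs')⟩
        have eh : h = h' := e1.trans e2.symm
        subst eh
        have es : s = s' := by rwa [sub_right_inj] at heq
        subst es
        rfl
      · intro v
        obtain ⟨c, ⟨hcH, hcadj⟩, -⟩ := hH v
        rw [hadj] at hcadj
        exact ⟨(⟨c, hcH⟩, ⟨c - v, hcadj⟩), by simp⟩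
    have hcardHm : Nat.card H * m = n := by
      have := Nat.card_congr (Equiv.ofBijective _ hbij)
      rwa [Nat.card_prod, Nat.card_zmod, Nat.card_coe_set_eq] at this
    set d := Nat.card H with hd
    have hdpos : 0 < d := Nat.card_pos
    -- H ≤ ker π
    have hHker : ∀ x ∈ H, π x = 0 := by
      intro x hx
      have h1 : d • (⟨x, hx⟩ : H) = 0 := card_nsmul_eq_zero'
      have h2 : d • x = 0 := by
        have := congrArg (fun y : H => (y : ZMod n)) h1
        simpa using this
      rw [hker]
      have h3 : ((d * x.val : ℕ) : ZMod n) = 0 := by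
        push_cast
        rw [ZMod.natCast_rightInverse x, ← nsmul_eq_mul]
        exact h2
      rw [ZMod.natCast_eq_zero_iff] at h3
      have h4 : d * m ∣ d * x.val := by rw [hcardHm]; exact h3
      exact (Nat.mul_dvd_mul_iff_left hdpos).1 h4
    -- card of ker π
    set K : AddSubgroup (ZMod n) := AddMonoidHom.ker π.toAddMonoidHom with hKdef
    have hmemK : ∀ x : ZMod n, x ∈ K ↔ π x = 0 := fun x => Iff.rfl
    have hcardker : m * Nat.card K = n := by
      have h1 := AddSubgroup.card_eq_card_quotient_mul_card_addSubgroup K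
      have h2 : Nat.card (ZMod n ⧸ K) = m := by
        have e := QuotientAddGroup.quotientKerEquivOfSurjective π.toAddMonoidHom hπsurj
        rw [Nat.card_congr e.toEquiv, Nat.card_zmod]
      rw [Nat.card_zmod] at h1
      rw [h2] at h1
      omega
    have hcardeq : Nat.card K = d := by
      have : m * Nat.card K = m * d := by rw [hcardker, ← hcardHm]; ring
      exact Nat.eq_of_mul_eq_mul_left hmpos this
    -- H = K as sets
    have hsets : (H : Set (ZMod n)) = (K : Set (ZMod n)) := by
      apply Set.eq_of_subset_of_ncard_le
      · intro x hx
        exact (hmemK x).2 (hHker x hx)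
      · rw [← Nat.card_coe_set_eq, ← Nat.card_coe_set_eq]
        show Nat.card K ≤ Nat.card H
        rw [hcardeq]
      · exact Set.toFinite _
    intro s hs s' hs' hne hcong
    have hπss' : π (s - s') = 0 := by
      rw [map_sub, hπ, hπ, sub_eq_zero]
      exact (ZMod.natCast_eq_natCast_iff _ _ _).2 hcong
    have hmem : s - s' ∈ H := by
      rw [← SetLike.mem_coe, hsets]
      exact (hmemK _).2 hπss'
    obtain ⟨c, -, huniq⟩ := hH (-s')
    have e1 : (0 : ZMod n) = c :=
      huniq 0 ⟨H.zero_mem, (hadj _ _).2 (by rw [zero_sub, neg_neg]; exact hs')⟩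
    have e2 : s - s' = c :=
      huniq (s - s') ⟨hmem, (hadj _ _).2 (by rw [sub_neg_eq_add, sub_add_cancel]; exact hs)⟩
    exact hne (by have := e2.trans e1.symm; rwa [sub_eq_zero] at this)
  · intro hcond
    have hinj : Set.InjOn π S := by
      intro s hs s' hs' heq
      by_contra hne
      refine hcond s hs s' hs' hne ?_
      rw [← ZMod.natCast_eq_natCast_iff, ← hπ, ← hπ]
      exact heq
    have himg : π '' S = Set.univ := by
      apply Set.eq_of_subset_of_ncard_le (Set.subset_univ _)
      rw [Set.ncard_image_of_injOn hinj, Set.ncard_univ, Nat.card_zmod]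
    refine ⟨AddMonoidHom.ker π.toAddMonoidHom, ?_⟩
    intro v
    have : -π v ∈ π '' S := by rw [himg]; trivial
    obtain ⟨s, hs, hπs⟩ := this
    refine ⟨v + s, ⟨?_, (hadj _ _).2 (by rw [add_sub_cancel_left]; exact hs)⟩, ?_⟩
    · show π (v + s) = 0
      rw [map_add, hπs]
      ring
    · rintro c ⟨hcH, hcadj⟩
      rw [hadj] at hcadj
      have hc0 : π c = 0 := hcH
      have : π (c - v) = π ((v + s) - v) := by
        rw [map_sub, hc0, map_sub, map_add, hπs]
        ring
      have := hinj hcadj (by rw [add_sub_cancel_left]; exact hs) this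
      rwa [sub_left_inj] at this
end
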